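/- arXiv:2309.16176 — 5 statements merged into one kernel-verified Lean document; each statement's English description precedes it below -/
import Mathlib

section
/- Let F be a field and let S ∈ F^{n×k} be a matrix all of whose d×d submatrices are non-singular, for some d ≥ 1. Then for every non-zero vector r ∈ Fⁿ with at most d non-zero entries, the row vector rᵀS has fewer than d zero coordinates; equivalently, ‖Sᵀr‖₀ ≥ k − d + 1. -/
/-- If every `d × d` submatrix of `S ∈ F^{n×k}` is non-singular, then for every non-zero
`d`-sparse vector `r`, the vector `rᵀS` has at least `k - d + 1` non-zero coordinates. -/
theorem stmt_3 {F : Type*} [Field F] [DecidableEq F] {n k d : ℕ} (hd : 1 ≤ d) (hdn : d ≤ n) (hdk : d ≤ k)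
    (S : Matrix (Fin n) (Fin k) F)
    (hreg : ∀ (r : Fin d → Fin n) (c : Fin d → Fin k),
      Function.Injective r → Function.Injective c → (S.submatrix r c).det ≠ 0)
    (r : Fin n → F) (hr : r ≠ 0)
    (hsp : (Finset.univ.filter (fun i : Fin n => r i ≠ 0)).card ≤ d) :
    k - d + 1 ≤ (Finset.univ.filter (fun j : Fin k => Matrix.vecMul r S j ≠ 0)).card := by
  by_contra hlt
  push_neg at hlt
  -- the zero set of rᵀS has at least d elements
  have hzero : d ≤ (Finset.univ.filter (fun j : Fin k => Matrix.vecMul r S j = 0)).card := by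
    have hcompl : (Finset.univ.filter (fun j : Fin k => Matrix.vecMul r S j = 0)) =
        (Finset.univ.filter (fun j : Fin k => Matrix.vecMul r S j ≠ 0))ᶜ := by
      ext j; simp [not_not]
    rw [hcompl, Finset.card_compl, Fintype.card_fin]
    omega
  obtain ⟨C, hC, hCcard⟩ := Finset.exists_subset_card_eq hzero
  obtain ⟨R, hTR, hRcard⟩ := Finset.exists_superset_card_eq hsp (by simpa using hdn)
  set c : Fin d → Fin k := fun i => C.orderIsoOfFin hCcard i
  set rr : Fin d → Fin n := fun i => R.orderIsoOfFin hRcard i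
  have hcinj : Function.Injective c := fun a b h => by
    have := (C.orderIsoOfFin hCcard).injective (Subtype.ext h); exact this
  have hrrinj : Function.Injective rr := fun a b h => by
    have := (R.orderIsoOfFin hRcard).injective (Subtype.ext h); exact this
  set M := S.submatrix rr c with hM
  have hdet := hreg rr c hrrinj hcinj
  set v : Fin d → F := fun i => r (rr i) with hv
  -- v ᵥ* M = 0
  have hvM : Matrix.vecMul v M = 0 := by
    funext j
    have hsum : ∑ i : Fin d, v i * M i j = ∑ x ∈ R, r x * S x (c j) := by
      rw [← Finset.sum_coe_sort R (fun x => r x * S x (c j))]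
      exact Equiv.sum_comp (R.orderIsoOfFin hRcard).toEquiv
        (fun x => r (x : Fin n) * S (x : Fin n) (c j))
    have hfull : ∑ x ∈ R, r x * S x (c j) = ∑ x : Fin n, r x * S x (c j) := by
      refine Finset.sum_subset (Finset.subset_univ R) (fun x _ hx => ?_)
      have hx0 : r x = 0 := by
        by_contra h0
        exact hx (hTR (by simp [h0]))
      simp [hx0]
    have hj : Matrix.vecMul r S (c j) = 0 := by
      have : c j ∈ C := (C.orderIsoOfFin hCcard j).2
      have := hC this
      simpa using (Finset.mem_filter.mp this).2
    simp only [Matrix.vecMul, dotProduct] at hj ⊢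
    rw [hsum, hfull]
    simpa using hj
  -- hence v = 0, since M is invertible
  have hvz : v = 0 := by
    have hunit : IsUnit M.det := isUnit_iff_ne_zero.mpr hdet
    have := congrArg (fun w => Matrix.vecMul w M⁻¹) hvM
    simpa [Matrix.vecMul_vecMul, Matrix.mul_nonsing_inv M hunit] using this
  -- but v is nonzero: some entry of r is nonzero and its index is in R
  obtain ⟨i, hi⟩ : ∃ i, r i ≠ 0 := by
    by_contra h; push_neg at h; exact hr (funext h)
  have hiR : i ∈ R := hTR (by simp [hi])
  obtain ⟨j, hj⟩ := (R.orderIsoOfFin hRcard).surjective ⟨i, hiR⟩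
  have : v j = r i := congrArg (fun x : R => r (x : Fin n)) hj
  rw [hvz] at this
  exact hi (by simpa using this.symm)
end

section
/- Let R be a commutative ring and let A, B, C ∈ R^{n×n}. Define the 3n×3n block matrices A' = [[I, 0, A],[0, I, −A],[Aᵀ, −Aᵀ, I]], B' = [[I, 0, Bᵀ],[0, I, Bᵀ],[B, B, I]], and C' = [[I + C, C, Bᵀ + A],[−C, I − C, Bᵀ − A],[Aᵀ + B, −Aᵀ + B, I]]. Then A' and B' are symmetric matrices, and A'B' = C' if and only if AB = C. -/
open Matrix

/-- A `3×3` block matrix with `n × n` blocks. -/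
def block3 {R : Type*} {n : ℕ} (M : Matrix (Fin 3) (Fin 3) (Matrix (Fin n) (Fin n) R)) :
    Matrix (Fin 3 × Fin n) (Fin 3 × Fin n) R :=
  fun p q => M p.1 q.1 p.2 q.2

lemma block3_mul {R : Type*} [CommRing R] {n : ℕ}
    (M N : Matrix (Fin 3) (Fin 3) (Matrix (Fin n) (Fin n) R)) :
    block3 M * block3 N = block3 (M * N) := by
  ext ⟨i, p⟩ ⟨k, q⟩
  simp only [block3, Matrix.mul_apply, Matrix.sum_apply, Fintype.sum_prod_type]

lemma block3_inj {R : Type*} {n : ℕ}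
    {M N : Matrix (Fin 3) (Fin 3) (Matrix (Fin n) (Fin n) R)}
    (h : block3 M = block3 N) : M = N := by
  apply Matrix.ext; intro i j
  apply Matrix.ext; intro p q
  exact congrFun (congrFun h (i, p)) (j, q)

lemma block3_symm {R : Type*} {n : ℕ}
    {M : Matrix (Fin 3) (Fin 3) (Matrix (Fin n) (Fin n) R)}
    (h : ∀ i j, (M j i)ᵀ = M i j) : (block3 M).IsSymm := by
  ext ⟨i, p⟩ ⟨j, q⟩
  have := congrFun (congrFun (h i j) p) q
  simpa [block3, Matrix.transpose_apply, Matrix.IsSymm] using this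

/-- Reduction from MMV to Symmetric MMV: `A'` and `B'` are symmetric, and `A'B' = C'`
iff `AB = C`. -/
theorem stmt_9 {R : Type*} [CommRing R] {n : ℕ} (A B C : Matrix (Fin n) (Fin n) R) :
    (block3 !![1, 0, A; 0, 1, -A; Aᵀ, -Aᵀ, 1]).IsSymm ∧
    (block3 !![1, 0, Bᵀ; 0, 1, Bᵀ; B, B, 1]).IsSymm ∧
    (block3 !![1, 0, A; 0, 1, -A; Aᵀ, -Aᵀ, 1] * block3 !![1, 0, Bᵀ; 0, 1, Bᵀ; B, B, 1] =
      block3 !![1 + C, C, Bᵀ + A; -C, 1 - C, Bᵀ - A; Aᵀ + B, -Aᵀ + B, 1] ↔ A * B = C) := by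
  refine ⟨block3_symm ?_, block3_symm ?_, ?_⟩
  · intro i j; fin_cases i <;> fin_cases j <;> simp
  · intro i j; fin_cases i <;> fin_cases j <;> simp
  · rw [block3_mul]
    have hprod : (!![1, 0, A; 0, 1, -A; Aᵀ, -Aᵀ, 1] * !![1, 0, Bᵀ; 0, 1, Bᵀ; B, B, 1] :
        Matrix (Fin 3) (Fin 3) (Matrix (Fin n) (Fin n) R)) =
        !![1 + A * B, A * B, Bᵀ + A; -(A * B), 1 - A * B, Bᵀ - A; Aᵀ + B, -Aᵀ + B, 1] := by
      ext i j
      fin_cases i <;> fin_cases j <;>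
        simp [Matrix.mul_fin_three, mul_comm] <;> noncomm_ring
    rw [hprod]
    constructor
    · intro h
      have := congrFun (congrFun (block3_inj h) 0) 1
      simpa using this
    · intro h; rw [h]
end

section
/- Let R be a ring, k ≥ 2, and A₁,…,Aₖ, C ∈ R^{n×n}. Define 2n×2n block matrices A₁' = [[A₁, I],[0, 0]], A_i' = [[A_i, 0],[0, I]] for 1 < i < k, and Aₖ' = [[Aₖ, 0],[−C, 0]]. Then A₁'A₂'⋯Aₖ' = [[A₁A₂⋯Aₖ − C, 0],[0, 0]]; in particular, the product of the A_i' is the zero matrix if and only if A₁⋯Aₖ = C. -/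
lemma stmt_11_aux {R : Type*} [Ring R] {n : ℕ} (C X : Matrix (Fin n) (Fin n) R)
    (L : List (Matrix (Fin n) (Fin n) R)) :
    (L.map (fun B => Matrix.fromBlocks B 0 0 (1 : Matrix (Fin n) (Fin n) R))).prod *
        Matrix.fromBlocks X (0 : Matrix (Fin n) (Fin n) R) (-C) 0 =
      Matrix.fromBlocks (L.prod * X) 0 (-C) 0 := by
  induction L with
  | nil => simp
  | cons B L ih =>
    simp only [List.map_cons, List.prod_cons, mul_assoc, ih,
      Matrix.fromBlocks_multiply]
    simp [mul_assoc]

/-- Reduction from k-MMV to k-AllZeroes: the product of the block matrices `Aᵢ'`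
is `[[A₁⋯Aₖ − C, 0],[0,0]]`, so it is zero iff `A₁⋯Aₖ = C`. -/
theorem stmt_11 {R : Type*} [Ring R] {n k : ℕ} (hk : 2 ≤ k)
    (A : Fin k → Matrix (Fin n) (Fin n) R) (C : Matrix (Fin n) (Fin n) R)
    (A' : Fin k → Matrix (Fin n ⊕ Fin n) (Fin n ⊕ Fin n) R)
    (hA' : ∀ i : Fin k, A' i =
      if (i : ℕ) = 0 then Matrix.fromBlocks (A i) 1 0 0
      else if (i : ℕ) = k - 1 then Matrix.fromBlocks (A i) 0 (-C) 0
      else Matrix.fromBlocks (A i) 0 0 1) :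
    (List.ofFn A').prod = Matrix.fromBlocks ((List.ofFn A).prod - C) 0 0 0 ∧
    ((List.ofFn A').prod = 0 ↔ (List.ofFn A).prod = C) := by
  obtain ⟨m, rfl⟩ : ∃ m, k = m + 2 := ⟨k - 2, by omega⟩
  have h0 : A' 0 = Matrix.fromBlocks (A 0) 1 0 0 := by
    rw [hA']; simp
  have hlast : A' (Fin.last (m + 1)) =
      Matrix.fromBlocks (A (Fin.last (m + 1))) 0 (-C) 0 := by
    rw [hA']; simp
  have hmid : ∀ i : Fin m, A' i.succ.castSucc =
      Matrix.fromBlocks (A i.succ.castSucc) 0 0 1 := by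
    intro i
    have hi := i.isLt
    rw [hA', if_neg (by simp), if_neg (by simp; omega)]
  have hsplit : ∀ (B : Fin (m + 2) → Matrix (Fin n ⊕ Fin n) (Fin n ⊕ Fin n) R),
      (List.ofFn B).prod =
        B 0 * ((List.ofFn fun i : Fin m => B i.succ.castSucc).prod *
          B (Fin.last (m + 1))) := by
    intro B
    rw [List.ofFn_succ', List.concat_eq_append, List.ofFn_succ]
    simp [mul_assoc]
  have hsplitA : ∀ (B : Fin (m + 2) → Matrix (Fin n) (Fin n) R),
      (List.ofFn B).prod =
        B 0 * ((List.ofFn fun i : Fin m => B i.succ.castSucc).prod *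
          B (Fin.last (m + 1))) := by
    intro B
    rw [List.ofFn_succ', List.concat_eq_append, List.ofFn_succ]
    simp [mul_assoc]
  have hmidlist : (List.ofFn fun i : Fin m => A' i.succ.castSucc) =
      (List.ofFn fun i : Fin m => A i.succ.castSucc).map
        (fun B => Matrix.fromBlocks B 0 0 (1 : Matrix (Fin n) (Fin n) R)) := by
    rw [List.map_ofFn]
    exact congrArg List.ofFn (funext fun i => hmid i)
  have key : (List.ofFn A').prod =
      Matrix.fromBlocks ((List.ofFn A).prod - C) 0 0 0 := by
    rw [hsplit A', hmidlist, h0, hlast, stmt_11_aux, hsplitA A,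
      Matrix.fromBlocks_multiply]
    simp [sub_eq_add_neg, mul_assoc]
  refine ⟨key, ?_⟩
  rw [key]
  constructor
  · intro h
    have h2 : (List.ofFn A).prod - C = 0 := by
      have h3 := congrArg Matrix.toBlocks₁₁ h
      simp [Matrix.toBlocks_fromBlocks₁₁, Matrix.toBlocks₁₁] at h3
      ext i j
      have h4 := congrFun (congrFun h3 i) j
      simpa using h4
    exact sub_eq_zero.mp h2
  · intro h
    rw [h]
    simp
end

section
/- Let F be a field, let A, B ∈ F^{n×n} with AB ≠ 0. Then the probability that a uniformly random vector x ∈ {0,1}ⁿ satisfies ABx = 0 is at most 1/2. (Correctness of Freivalds's algorithm.) -/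
/-- Correctness of Freivalds's algorithm: if `AB ≠ 0`, then at most half of the `2ⁿ`
vectors `x ∈ {0,1}ⁿ` satisfy `ABx = 0`. -/
theorem stmt_13 {F : Type*} [Field F] [DecidableEq F] {n : ℕ}
    (A B : Matrix (Fin n) (Fin n) F) (hAB : A * B ≠ 0) :
    (Finset.univ.filter (fun x : Fin n → Bool =>
        (A * B).mulVec (fun i => if x i then 1 else 0) = 0)).card * 2 ≤ 2 ^ n := by
  classical
  set M := A * B with hM
  obtain ⟨i0, j0, hij⟩ : ∃ i j, M i j ≠ 0 := by
    by_contra h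
    push_neg at h
    exact hAB (Matrix.ext fun i j => h i j)
  set v : (Fin n → Bool) → (Fin n → F) := fun x i => if x i then 1 else 0 with hv
  set f : (Fin n → Bool) → (Fin n → Bool) := fun x => Function.update x j0 (!x j0) with hf
  have hfinv : Function.Involutive f := by
    intro x
    funext i
    by_cases h : i = j0 <;> simp [hf, Function.update, h]
  have key : ∀ x : Fin n → Bool, M.mulVec (v x) = 0 → M.mulVec (v (f x)) ≠ 0 := by
    intro x hx hx'
    have e1 : ∑ j, M i0 j * v x j = 0 := congrFun hx i0
    have e2 : ∑ j, M i0 j * v (f x) j = 0 := congrFun hx' i0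
    have hdiff : ∑ j, (M i0 j * v (f x) j - M i0 j * v x j) = 0 := by
      rw [Finset.sum_sub_distrib, e1, e2, sub_zero]
    have hsingle : ∑ j, (M i0 j * v (f x) j - M i0 j * v x j)
        = M i0 j0 * v (f x) j0 - M i0 j0 * v x j0 := by
      apply Finset.sum_eq_single
      · intro j _ hj
        have : f x j = x j := by simp [hf, Function.update, hj]
        rw [show v (f x) j = v x j by simp [hv, this]]
        ring
      · intro h; exact absurd (Finset.mem_univ j0) h
    rw [hsingle] at hdiff
    have hne : v (f x) j0 - v x j0 ≠ 0 := by
      have : f x j0 = !x j0 := by simp [hf]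
      cases hxj : x j0 <;> simp [hv, this, hxj]
    have : M i0 j0 * (v (f x) j0 - v x j0) = 0 := by rw [mul_sub]; exact hdiff
    exact hij (by
      rcases mul_eq_zero.mp this with h | h
      · exact h
      · exact absurd h hne)
  set P : (Fin n → Bool) → Prop := fun x => M.mulVec (v x) = 0 with hP
  have hcard : (Finset.univ.filter (fun x => P x)).card
      ≤ (Finset.univ.filter (fun x => ¬ P x)).card := by
    apply Finset.card_le_card_of_injOn f
    · intro x hx
      simp only [Finset.mem_coe, Finset.mem_filter, Finset.mem_univ, true_and] at hx ⊢
      exact key x hx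
    · intro a _ b _ hab
      exact hfinv.injective hab
  have htotal : (Finset.univ.filter (fun x => P x)).card
      + (Finset.univ.filter (fun x => ¬ P x)).card = 2 ^ n := by
    rw [Finset.card_filter_add_card_filter_not]
    simp [Finset.card_univ]
  calc (Finset.univ.filter (fun x => P x)).card * 2
      = (Finset.univ.filter (fun x => P x)).card
        + (Finset.univ.filter (fun x => P x)).card := by ring
    _ ≤ (Finset.univ.filter (fun x => P x)).card
        + (Finset.univ.filter (fun x => ¬ P x)).card := by omega
    _ = 2 ^ n := htotal
end

section
/- Let F be a field, let H ∈ F^{d×n} (with d ≤ n) be a matrix such that every non-zero vector x ∈ Fⁿ with ‖x‖₀ ≤ d satisfies Hx ≠ 0, and let A, B ∈ F^{n×n} be matrices such that AB has at most d² non-zero entries. Then AB = 0 if and only if both H·(AB) = 0 and H·(AB)ᵀ = 0. -/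
open Matrix

/-- Correctness of the deterministic sparse MMV algorithm: if `H` detects all non-zero
`d`-sparse vectors and `AB` has at most `d²` non-zero entries, then `AB = 0` iff
`H(AB) = 0` and `H(AB)ᵀ = 0`. -/
theorem stmt_17 {F : Type*} [Field F] [DecidableEq F] {n d : ℕ} (hdn : d ≤ n)
    (H : Matrix (Fin d) (Fin n) F)
    (hH : ∀ x : Fin n → F, x ≠ 0 →
      (Finset.univ.filter (fun j : Fin n => x j ≠ 0)).card ≤ d → H.mulVec x ≠ 0)
    (A B : Matrix (Fin n) (Fin n) F)
    (hsp : (Finset.univ.filter (fun q : Fin n × Fin n => (A * B) q.1 q.2 ≠ 0)).card ≤ d ^ 2) :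
    A * B = 0 ↔ (H * (A * B) = 0 ∧ H * (A * B)ᵀ = 0) := by
  constructor
  · intro h; rw [h]; simp
  rintro ⟨h1, h2⟩
  by_contra hM
  obtain ⟨i, j, hij⟩ : ∃ i j, (A * B) i j ≠ 0 := by
    by_contra h
    push_neg at h
    exact hM (by ext i j; simp [h])
  -- every nonzero column has more than d nonzero entries
  have hcol : ∀ j : Fin n, (∃ i, (A * B) i j ≠ 0) →
      d < (Finset.univ.filter (fun i : Fin n => (A * B) i j ≠ 0)).card := by
    rintro j ⟨i0, hi0⟩
    by_contra hle
    push_neg at hle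
    have hne : (fun i => (A * B) i j) ≠ 0 := by
      intro h; exact hi0 (congrFun h i0)
    refine hH _ hne hle ?_
    ext k
    have := congrFun (congrFun h1 k) j
    simpa [Matrix.mul_apply, Matrix.mulVec, dotProduct] using this
  have hrow : ∀ i : Fin n, (∃ j, (A * B) i j ≠ 0) →
      d < (Finset.univ.filter (fun j : Fin n => (A * B) i j ≠ 0)).card := by
    rintro i ⟨j0, hj0⟩
    by_contra hle
    push_neg at hle
    have hne : (fun j => (A * B) i j) ≠ 0 := by
      intro h; exact hj0 (congrFun h j0)
    refine hH _ hne hle ?_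
    ext k
    have := congrFun (congrFun h2 k) i
    simpa [Matrix.mul_apply, Matrix.mulVec, dotProduct, Matrix.transpose_apply, mul_comm] using this
  set C := Finset.univ.filter (fun i' : Fin n => (A * B) i' j ≠ 0) with hCdef
  have hC : d < C.card := hcol j ⟨i, hij⟩
  set T := C.biUnion (fun i' =>
    {i'} ×ˢ (Finset.univ.filter (fun j' : Fin n => (A * B) i' j' ≠ 0))) with hTdef
  have hsub : T ⊆ Finset.univ.filter (fun q : Fin n × Fin n => (A * B) q.1 q.2 ≠ 0) := by
    intro q hq
    simp only [hTdef, Finset.mem_biUnion, Finset.mem_product, Finset.mem_singleton,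
      Finset.mem_filter, Finset.mem_univ, true_and] at hq ⊢
    obtain ⟨i', _, hq1, hq2⟩ := hq
    rwa [hq1]
  have hTcard : T.card = ∑ i' ∈ C,
      (Finset.univ.filter (fun j' : Fin n => (A * B) i' j' ≠ 0)).card := by
    rw [hTdef, Finset.card_biUnion]
    · refine Finset.sum_congr rfl fun i' _ => ?_
      simp [Finset.card_product]
    · intro a _ b _ hab
      simp only [Finset.disjoint_left, Finset.mem_product, Finset.mem_singleton]
      rintro ⟨x, y⟩ ⟨rfl, -⟩ ⟨h, -⟩
      exact hab h
  have hge : ∀ i' ∈ C, d + 1 ≤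
      (Finset.univ.filter (fun j' : Fin n => (A * B) i' j' ≠ 0)).card := by
    intro i' hi'
    simp only [hCdef, Finset.mem_filter] at hi'
    exact hrow i' ⟨j, hi'.2⟩
  have hbig : (d + 1) * (d + 1) ≤ T.card := by
    calc (d + 1) * (d + 1) ≤ C.card * (d + 1) := by
          exact Nat.mul_le_mul_right _ hC
      _ = ∑ _i' ∈ C, (d + 1) := by rw [Finset.sum_const, smul_eq_mul]
      _ ≤ _ := by rw [hTcard]; exact Finset.sum_le_sum hge
  have := (hbig.trans (Finset.card_le_card hsub)).trans hsp
  nlinarith [this]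
end
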